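/- Let ε > 0 and N ≥ 1. Define Ξ(x) = (3/(4ε³(3ε² − |x|²)))(10ε⁴ + 5Nε⁴ − 24ε²|x|² − 6Nε²|x|² + 6|x|⁴ + N|x|⁴) for |x| ≤ ε. Then −3/ε ≤ Ξ(x) ≤ 5(N+2)/(4ε) for all |x| ≤ ε. -/

import Mathlib

/-!
Over the positive denominator `4ε³(3ε² - r²)`, with `r = |x|`, both gaps in the bounds factor:
`Ξ + 3/ε` has numerator `3(ε² - r²)((22 + 5N)ε² - (6 + N)r²)` and `5(N + 2)/(4ε) - Ξ` has
numerator `r²((13N + 62)ε² - (3N + 18)r²)`, and every factor is nonnegative when `r ≤ ε`.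
-/

noncomputable section

namespace QuarticRegularization

/-- `Ξ` as a function of the dimension `n`, the radius `ε` and `r = |x|`. -/
def xi (n ε r : ℝ) : ℝ :=
  3 / (4 * ε ^ 3 * (3 * ε ^ 2 - r ^ 2)) *
    (10 * ε ^ 4 + 5 * n * ε ^ 4 - 24 * ε ^ 2 * r ^ 2
      - 6 * n * ε ^ 2 * r ^ 2 + 6 * r ^ 4 + n * r ^ 4)

variable {n ε r : ℝ}

lemma three_mul_sq_sub_sq_pos (hε : 0 < ε) (hr : |r| ≤ ε) : 0 < 3 * ε ^ 2 - r ^ 2 := by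
  nlinarith [sq_le_sq' (abs_le.mp hr).1 (abs_le.mp hr).2]

lemma xi_add_three_div_eq (hε : ε ≠ 0) (hr : 3 * ε ^ 2 - r ^ 2 ≠ 0) :
    xi n ε r + 3 / ε =
      3 * (ε ^ 2 - r ^ 2) * ((22 + 5 * n) * ε ^ 2 - (6 + n) * r ^ 2) /
        (4 * ε ^ 3 * (3 * ε ^ 2 - r ^ 2)) := by
  unfold xi
  field_simp
  ring

lemma div_sub_xi_eq (hε : ε ≠ 0) (hr : 3 * ε ^ 2 - r ^ 2 ≠ 0) :
    5 * (n + 2) / (4 * ε) - xi n ε r =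
      r ^ 2 * ((13 * n + 62) * ε ^ 2 - (3 * n + 18) * r ^ 2) /
        (4 * ε ^ 3 * (3 * ε ^ 2 - r ^ 2)) := by
  have hD : 4 * ε ^ 3 * (3 * ε ^ 2 - r ^ 2) ≠ 0 := by positivity
  rw [xi, div_mul_eq_mul_div, div_sub_div _ _ (by positivity) hD, div_eq_div_iff (by positivity) hD]
  ring

theorem neg_three_div_le_xi (hn : 0 ≤ n) (hε : 0 < ε) (hr : |r| ≤ ε) :
    -3 / ε ≤ xi n ε r := by
  have hsq : r ^ 2 ≤ ε ^ 2 := sq_le_sq' (abs_le.mp hr).1 (abs_le.mp hr).2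
  have hden := three_mul_sq_sub_sq_pos hε hr
  have hgap : 0 ≤ xi n ε r + 3 / ε := by
    rw [xi_add_three_div_eq hε.ne' hden.ne']
    apply div_nonneg _ (by positivity)
    exact mul_nonneg (by linarith) (by nlinarith)
  rw [neg_div]
  linarith

theorem xi_le_div (hn : 0 ≤ n) (hε : 0 < ε) (hr : |r| ≤ ε) :
    xi n ε r ≤ 5 * (n + 2) / (4 * ε) := by
  have hsq : r ^ 2 ≤ ε ^ 2 := sq_le_sq' (abs_le.mp hr).1 (abs_le.mp hr).2
  have hden := three_mul_sq_sub_sq_pos hε hr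
  have hgap : 0 ≤ 5 * (n + 2) / (4 * ε) - xi n ε r := by
    rw [div_sub_xi_eq hε.ne' hden.ne']
    apply div_nonneg _ (by positivity)
    exact mul_nonneg (sq_nonneg r) (by nlinarith)
  linarith

end QuarticRegularization

end

open QuarticRegularization in
theorem xi_bounds_general {N : ℕ} (ε : ℝ) (hε : 0 < ε)
    (x : EuclideanSpace ℝ (Fin N)) (hx : ‖x‖ ≤ ε) :
    -3 / ε ≤ 3 / (4 * ε ^ 3 * (3 * ε ^ 2 - ‖x‖ ^ 2)) *
        (10 * ε ^ 4 + 5 * (N : ℝ) * ε ^ 4 - 24 * ε ^ 2 * ‖x‖ ^ 2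
          - 6 * (N : ℝ) * ε ^ 2 * ‖x‖ ^ 2 + 6 * ‖x‖ ^ 4 + (N : ℝ) * ‖x‖ ^ 4) ∧
    3 / (4 * ε ^ 3 * (3 * ε ^ 2 - ‖x‖ ^ 2)) *
        (10 * ε ^ 4 + 5 * (N : ℝ) * ε ^ 4 - 24 * ε ^ 2 * ‖x‖ ^ 2
          - 6 * (N : ℝ) * ε ^ 2 * ‖x‖ ^ 2 + 6 * ‖x‖ ^ 4 + (N : ℝ) * ‖x‖ ^ 4)
      ≤ 5 * ((N : ℝ) + 2) / (4 * ε) := by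
  have hr : |‖x‖| ≤ ε := by rwa [abs_norm]
  exact ⟨neg_three_div_le_xi N.cast_nonneg hε hr, xi_le_div N.cast_nonneg hε hr⟩

/-- Bounds on the scalar coefficient `Ξ` on `|x| ≤ ε`. -/
theorem xi_bounds {N : ℕ} (hN : 1 ≤ N) (ε : ℝ) (hε : 0 < ε)
    (x : EuclideanSpace ℝ (Fin N)) (hx : ‖x‖ ≤ ε) :
    -3 / ε ≤ 3 / (4 * ε ^ 3 * (3 * ε ^ 2 - ‖x‖ ^ 2)) *
        (10 * ε ^ 4 + 5 * (N : ℝ) * ε ^ 4 - 24 * ε ^ 2 * ‖x‖ ^ 2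
          - 6 * (N : ℝ) * ε ^ 2 * ‖x‖ ^ 2 + 6 * ‖x‖ ^ 4 + (N : ℝ) * ‖x‖ ^ 4) ∧
    3 / (4 * ε ^ 3 * (3 * ε ^ 2 - ‖x‖ ^ 2)) *
        (10 * ε ^ 4 + 5 * (N : ℝ) * ε ^ 4 - 24 * ε ^ 2 * ‖x‖ ^ 2
          - 6 * (N : ℝ) * ε ^ 2 * ‖x‖ ^ 2 + 6 * ‖x‖ ^ 4 + (N : ℝ) * ‖x‖ ^ 4)
      ≤ 5 * ((N : ℝ) + 2) / (4 * ε) :=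
  xi_bounds_general ε hε x hx
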